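/- For all integers n ≥ 1, l ≥ 0, m ≥ 1, the double coset K_{l,m}·s₁s₂s₁·K^#(pⁿ) is disjoint from K_{l,m}·A(z)·K^#(pⁿ) for every z ∈ p^{n−m−1} ∩ o, and is disjoint from K_{l,m}·D(w)E(y,w)s₁·K^#(pⁿ) for every w ∈ o^× and every y ∈ p^{n−m−1} ∩ o. Indeed, for every r ∈ R(F) and every h₁ of the form A(z) or D(w)E(y,w)s₁ as above, the matrix (s₁s₂s₁)^{−1}·h(l,m)^{−1} r h(l,m)·h₁ has its (2,2) entry in p and hence does not lie in K^#(pⁿ). -/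

import Mathlib

open Matrix Polynomial

set_option maxHeartbeats 1000000
set_option synthInstance.maxHeartbeats 400000

noncomputable section

namespace GSpPaper

variable {F : Type*} [Field F]

/-- 4×4 matrices over `F`. -/
abbrev M4 (F : Type*) := Matrix (Fin 4) (Fin 4) F

/-- 2×2 matrices over `F`. -/
abbrev M2 (F : Type*) := Matrix (Fin 2) (Fin 2) F

/-- `O` is the valuation ring of a (non-archimedean) discretely valued field `F`
with uniformizer `ϖ`:  `O` is a valuation subring, `ϖ` is a non-unit of `O`, and every
nonzero element of `F` is a power of `ϖ` times a unit of `O`. -/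
def IsDVSetup (O : Subring F) (ϖ : F) : Prop :=
  (∀ x : F, x ∉ O → x⁻¹ ∈ O) ∧ ϖ ∈ O ∧ ϖ ≠ 0 ∧ ϖ⁻¹ ∉ O ∧
    ∀ x : F, x ≠ 0 → ∃ (k : ℤ) (u : F), u ∈ O ∧ u⁻¹ ∈ O ∧ x = ϖ ^ k * u

/-- The units `o^×` of the ring of integers, as a subset of `F`. -/
def unitSet (O : Subring F) : Set F := {x : F | x ∈ O ∧ x⁻¹ ∈ O}

/-- The ideal `p^k = ϖ^k o`, as a subset of `F`. -/
def ppow (O : Subring F) (ϖ : F) (k : ℕ) : Set F := {x : F | ∃ y ∈ O, x = ϖ ^ k * y}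

/-- The cardinality `q` of the residue field `o/p`, defined as the number of
additive cosets of `p` in `o`. -/
def resCard (O : Subring F) (ϖ : F) : ℕ :=
  Nat.card {C : Set F // ∃ x ∈ O, C = {y : F | y ∈ O ∧ x - y ∈ ppow O ϖ 1}}

/-- Assemble a 4×4 matrix from four 2×2 blocks. -/
def blk (A B C D : M2 F) : M4 F :=
  Matrix.reindex finSumFinEquiv finSumFinEquiv (Matrix.fromBlocks A B C D)

/-- The symplectic form `J`. -/
def Jmat (F : Type*) [Field F] : M4 F := blk 0 1 (-1) 0

/-- The symplectic similitude group `GSp₄(F)` (as a set of matrices). -/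
def GSp4 (F : Type*) [Field F] : Set (M4 F) :=
  {g | g.det ≠ 0 ∧ ∃ μ : F, μ ≠ 0 ∧ gᵀ * Jmat F * g = μ • Jmat F}

/-- The maximal compact subgroup `K^H = GSp₄(F) ∩ GL₄(o)`. -/
def KH (O : Subring F) : Set (M4 F) :=
  {g ∈ GSp4 F | (∀ i j, g i j ∈ O) ∧ g.det ∈ unitSet O}

/-- The congruence subgroup `K^#(pⁿ)` of `K^H` (indices are 0-based, so `g 0 1`
is the (1,2) entry). -/
def Ksharp (O : Subring F) (ϖ : F) (n : ℕ) : Set (M4 F) :=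
  {g ∈ KH O |
    g 0 0 ∈ unitSet O ∧ g 1 1 ∈ unitSet O ∧ g 2 2 ∈ unitSet O ∧ g 3 3 ∈ unitSet O ∧
    g 0 1 ∈ ppow O ϖ n ∧ g 2 1 ∈ ppow O ϖ n ∧ g 3 0 ∈ ppow O ϖ n ∧
    g 3 1 ∈ ppow O ϖ n ∧ g 3 2 ∈ ppow O ϖ n ∧ g 2 0 ∈ ppow O ϖ 1}

/-- The Weyl group element `s₁`. -/
def s1 (F : Type*) [Field F] : M4 F := !![0,1,0,0; 1,0,0,0; 0,0,0,1; 0,0,1,0]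

/-- The Weyl group element `s₂`. -/
def s2 (F : Type*) [Field F] : M4 F := !![0,0,1,0; 0,1,0,0; -1,0,0,0; 0,0,0,1]

/-- `E4 i j c` is `c` times the matrix unit `E_{ij}` (0-based indices). -/
def E4 (i j : Fin 4) (t : F) : M4 F := Matrix.single i j t

/-- `A(z)`: the identity with (4,2) entry replaced by `zϖ`. -/
def Amat (ϖ z : F) : M4 F := 1 + E4 3 1 (z * ϖ)

/-- `r(w) = I + wϖE₁₂ − wϖE₄₃`. -/
def rmat (ϖ w : F) : M4 F := 1 + E4 0 1 (w * ϖ) - E4 3 2 (w * ϖ)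

/-- `D(w) = I + wE₂₁ − wE₃₄`. -/
def Dmat (w : F) : M4 F := 1 + E4 1 0 w - E4 2 3 w

/-- `E(y,w) = I + ywϖE₃₁ + yϖE₃₂ + yϖE₄₁`. -/
def Emat (ϖ y w : F) : M4 F := 1 + E4 2 0 (y * w * ϖ) + E4 2 1 (y * ϖ) + E4 3 0 (y * ϖ)

/-- The 2×2 matrix `[[x + yb/2, yc], [−ya, x − yb/2]]`. -/
def Tmat (a b c x y : F) : M2 F := !![x + y * b / 2, y * c; -(y * a), x - y * b / 2]

/-- The torus `T(F)` attached to `S = [[a, b/2], [b/2, c]]`. -/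
def TF (a b c : F) : Set (M2 F) := {t | ∃ x y : F, t = Tmat a b c x y ∧ t.det ≠ 0}

/-- The embedding `g ↦ diag(g, det(g)·ᵀg⁻¹)` of `GL₂` into `GSp₄`. -/
def embT (g : M2 F) : M4 F := blk g 0 0 (g.det • (g⁻¹)ᵀ)

/-- The unipotent group `U(F)`. -/
def UF (F : Type*) [Field F] : Set (M4 F) :=
  {u | ∃ X : M2 F, Xᵀ = X ∧ u = blk 1 X 0 1}

/-- The Bessel subgroup `R(F) = T(F)U(F)`. -/
def RF (a b c : F) : Set (M4 F) :=
  {r | ∃ t ∈ TF a b c, ∃ u ∈ UF F, r = embT t * u}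

/-- `h(l,m) = diag(ϖ^{2m+l}, ϖ^{m+l}, 1, ϖ^m)`. -/
def hmat (ϖ : F) (l m : ℕ) : M4 F :=
  Matrix.diagonal ![ϖ ^ (2*m+l), ϖ ^ (m+l), 1, ϖ ^ m]

/-- `K_{l,m} = h(l,m)⁻¹ R(F) h(l,m) ∩ K^H`. -/
def Klm (O : Subring F) (ϖ a b c : F) (l m : ℕ) : Set (M4 F) :=
  {g ∈ KH O | ∃ r ∈ RF a b c, g = (hmat ϖ l m)⁻¹ * r * hmat ϖ l m}

/-- The double coset `K₁ g K₂`. -/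
def DC {α : Type*} [Mul α] (K1 : Set α) (g : α) (K2 : Set α) : Set α :=
  {x | ∃ k1 ∈ K1, ∃ k2 ∈ K2, x = k1 * g * k2}

/-- The set of left cosets `gS`, `g ∈ G`. -/
def leftCosets {α : Type*} [Mul α] (S G : Set α) : Set (Set α) :=
  {C | ∃ g ∈ G, C = (fun h => g * h) '' S}

/-- `S` is a subgroup of `G` (inside an ambient monoid with an inversion). -/
def IsSubgroupOf {α : Type*} [Monoid α] [Inv α] (S G : Set α) : Prop :=
  S ⊆ G ∧ (1 : α) ∈ S ∧ (∀ x ∈ S, ∀ y ∈ S, x * y ∈ S) ∧ ∀ x ∈ S, x⁻¹ ∈ S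

section Basic
variable (O : Subring F) (ϖ : F)

lemma ppow_subset_O (hϖ : ϖ ∈ O) {k : ℕ} {x : F} (hx : x ∈ ppow O ϖ k) : x ∈ O := by
  obtain ⟨y, hy, rfl⟩ := hx
  exact O.mul_mem (O.pow_mem hϖ k) hy

lemma ppow_mono (hϖ : ϖ ∈ O) {k : ℕ} (hk : 1 ≤ k) {x : F} (hx : x ∈ ppow O ϖ k) :
    x ∈ ppow O ϖ 1 := by
  obtain ⟨y, hy, rfl⟩ := hx
  refine ⟨ϖ ^ (k - 1) * y, O.mul_mem (O.pow_mem hϖ _) hy, ?_⟩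
  rw [← mul_assoc, ← pow_add]
  congr 2
  omega

lemma p_add {x y : F} (hx : x ∈ ppow O ϖ 1) (hy : y ∈ ppow O ϖ 1) : x + y ∈ ppow O ϖ 1 := by
  obtain ⟨u, hu, rfl⟩ := hx; obtain ⟨v, hv, rfl⟩ := hy
  exact ⟨u + v, O.add_mem hu hv, by ring⟩

lemma p_neg {x : F} (hx : x ∈ ppow O ϖ 1) : -x ∈ ppow O ϖ 1 := by
  obtain ⟨u, hu, rfl⟩ := hx
  exact ⟨-u, O.neg_mem hu, by ring⟩

lemma p_mul_O {x y : F} (hx : x ∈ ppow O ϖ 1) (hy : y ∈ O) : x * y ∈ ppow O ϖ 1 := by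
  obtain ⟨u, hu, rfl⟩ := hx
  exact ⟨u * y, O.mul_mem hu hy, by ring⟩

lemma O_mul_p {x y : F} (hx : x ∈ O) (hy : y ∈ ppow O ϖ 1) : x * y ∈ ppow O ϖ 1 := by
  obtain ⟨u, hu, rfl⟩ := hy
  exact ⟨x * u, O.mul_mem hx hu, by ring⟩

lemma zero_mem_p : (0 : F) ∈ ppow O ϖ 1 := ⟨0, O.zero_mem, by ring⟩

/-- strong unit -/
def Su (x : F) : Prop := x ∈ O ∧ x ∉ ppow O ϖ 1

lemma su_ne_zero {x : F} (hx : Su O ϖ x) : x ≠ 0 := fun h => hx.2 (h ▸ zero_mem_p O ϖ)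

variable {O ϖ} (hDV : IsDVSetup O ϖ)
include hDV

lemma su_inv_mem {x : F} (hx : Su O ϖ x) : x⁻¹ ∈ O := by
  obtain ⟨_, hϖO, hϖ0, hϖinv, hval⟩ := hDV
  have hx0 : x ≠ 0 := su_ne_zero O ϖ hx
  obtain ⟨k, u, huO, huinv, hxe⟩ := hval x hx0
  have hu0 : u ≠ 0 := by
    rintro rfl
    simp at hxe
    exact hx0 hxe
  rcases lt_trichotomy k 0 with hk | hk | hk
  · exfalso
    apply hϖinv
    have he : ϖ⁻¹ = ϖ ^ (-k - 1).toNat * u⁻¹ * x := by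
      rw [hxe, ← zpow_natCast ϖ ((-k - 1).toNat)]
      have h1 : (((-k - 1).toNat : ℤ)) = -k - 1 := by omega
      rw [h1]
      have : ϖ ^ (-k - 1 : ℤ) * u⁻¹ * (ϖ ^ k * u) = (ϖ ^ (-k - 1 : ℤ) * ϖ ^ k) * (u⁻¹ * u) := by
        ring
      rw [this, ← zpow_add₀ hϖ0, inv_mul_cancel₀ hu0, mul_one]
      have : (-k - 1 + k : ℤ) = -1 := by ring
      rw [this, zpow_neg_one ϖ]
    rw [he]
    exact O.mul_mem (O.mul_mem (O.pow_mem hϖO _) huinv) hx.1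
  · subst hk
    simp only [zpow_zero, one_mul] at hxe
    rw [hxe]; exact huinv
  · exfalso
    apply hx.2
    refine ⟨ϖ ^ (k - 1).toNat * u, O.mul_mem (O.pow_mem hϖO _) huO, ?_⟩
    rw [hxe, ← mul_assoc, ← pow_add]
    have h2 : 1 + (k - 1).toNat = k.toNat := by omega
    rw [h2, ← zpow_natCast ϖ k.toNat]
    have h3 : ((k.toNat : ℤ)) = k := by omega
    rw [h3]

lemma su_unitSet {x : F} (hx : Su O ϖ x) : x ∈ unitSet O := ⟨hx.1, su_inv_mem hDV hx⟩

lemma su_of_unit {x : F} (hx : x ∈ unitSet O) (hx0 : x ≠ 0) : Su O ϖ x := by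
  refine ⟨hx.1, fun hp => ?_⟩
  obtain ⟨y, hy, hxe⟩ := hp
  apply hDV.2.2.2.1
  have hy0 : y ≠ 0 := by
    rintro rfl
    rw [mul_zero] at hxe
    exact hx0 hxe
  have : ϖ⁻¹ = y * x⁻¹ := by
    rw [hxe, pow_one]
    rw [mul_inv, mul_comm]
    rw [mul_assoc, inv_mul_cancel₀ hy0, mul_one]
  rw [this]
  exact O.mul_mem hy hx.2

lemma su_mul {x y : F} (hx : Su O ϖ x) (hy : Su O ϖ y) : Su O ϖ (x * y) := by
  refine ⟨O.mul_mem hx.1 hy.1, fun hp => ?_⟩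
  obtain ⟨t, ht, hte⟩ := hp
  apply hy.2
  refine ⟨x⁻¹ * t, O.mul_mem (su_inv_mem hDV hx) ht, ?_⟩
  have hx0 := su_ne_zero O ϖ hx
  field_simp
  rw [mul_comm y x, hte]
  ring

lemma su_add_p {x t : F} (hx : Su O ϖ x) (ht : t ∈ ppow O ϖ 1) : Su O ϖ (x + t) := by
  refine ⟨O.add_mem hx.1 (ppow_subset_O O ϖ hDV.2.1 ht), fun hp => ?_⟩
  apply hx.2
  have : x = (x + t) + (-t) := by ring
  rw [this]
  exact p_add O ϖ hp (p_neg O ϖ ht)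

lemma su_inv {x : F} (hx : Su O ϖ x) : Su O ϖ x⁻¹ := by
  have hx0 := su_ne_zero O ϖ hx
  refine ⟨su_inv_mem hDV hx, fun hp => ?_⟩
  obtain ⟨y, hy, hye⟩ := hp
  apply hDV.2.2.2.1
  have h1 : ϖ * (y * x) = 1 := by
    have : x⁻¹ * x = 1 := inv_mul_cancel₀ hx0
    rw [hye, pow_one] at this
    rw [← this]
    ring
  rw [inv_eq_of_mul_eq_one_right h1]
  exact O.mul_mem hy hx.1

lemma su_p_eq_zero {x : F} (hx : x ∈ unitSet O) (hp : x ∈ ppow O ϖ 1) : x = 0 := by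
  by_contra h0
  exact (su_of_unit hDV hx h0).2 hp

end Basic
section Blocks
variable [CharZero F] {a b c : F}

lemma blk_mul (A B C D A' B' C' D' : M2 F) :
    blk A B C D * blk A' B' C' D' =
      blk (A * A' + B * C') (A * B' + B * D') (C * A' + D * C') (C * B' + D * D') := by
  simp only [blk, Matrix.reindex_apply]
  rw [Matrix.submatrix_mul_equiv]
  rw [Matrix.fromBlocks_multiply]

lemma blk_one : blk (1 : M2 F) 0 0 1 = (1 : M4 F) := by
  simp only [blk, Matrix.reindex_apply, Matrix.fromBlocks_one]
  exact Matrix.submatrix_one_equiv finSumFinEquiv.symm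

lemma blk_inj {A B C D A' B' C' D' : M2 F} (h : blk A B C D = blk A' B' C' D') :
    A = A' ∧ B = B' ∧ C = C' ∧ D = D' := by
  simp only [blk] at h
  have h2 := (Matrix.reindex finSumFinEquiv finSumFinEquiv).injective h
  refine ⟨?_, ?_, ?_, ?_⟩
  · have := congrArg Matrix.toBlocks₁₁ h2
    simpa [Matrix.toBlocks_fromBlocks₁₁] using this
  · have := congrArg Matrix.toBlocks₁₂ h2
    simpa [Matrix.toBlocks_fromBlocks₁₂] using this
  · have := congrArg Matrix.toBlocks₂₁ h2
    simpa [Matrix.toBlocks_fromBlocks₂₁] using this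
  · have := congrArg Matrix.toBlocks₂₂ h2
    simpa [Matrix.toBlocks_fromBlocks₂₂] using this

lemma blk_apply_30 (A B C D : M2 F) : blk A B C D 3 0 = C 1 0 := by
  simp only [blk, Matrix.reindex_apply, Matrix.submatrix_apply]
  rfl

lemma blk_apply_31 (A B C D : M2 F) : blk A B C D 3 1 = C 1 1 := by
  simp only [blk, Matrix.reindex_apply, Matrix.submatrix_apply]
  rfl

lemma Tmat_mul (x1 y1 x2 y2 : F) :
    Tmat a b c x1 y1 * Tmat a b c x2 y2 =
      Tmat a b c (x1 * x2 + y1 * y2 * ((b ^ 2 - 4 * a * c) / 4)) (x1 * y2 + y1 * x2) := by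
  ext i j
  fin_cases i <;> fin_cases j <;>
    simp [Tmat, Matrix.mul_apply, Fin.sum_univ_succ] <;> field_simp <;> ring

lemma Tmat_det (x y : F) :
    (Tmat a b c x y).det = x ^ 2 - y ^ 2 * ((b ^ 2 - 4 * a * c) / 4) := by
  simp [Tmat, Matrix.det_fin_two]
  field_simp
  ring

lemma Tmat_adj (x y : F) : (Tmat a b c x y).adjugate = Tmat a b c x (-y) := by
  rw [show Tmat a b c x y = !![x + y * b / 2, y * c; -(y * a), x - y * b / 2] from rfl]
  rw [Matrix.adjugate_fin_two]
  ext i j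
  fin_cases i <;> fin_cases j <;> simp [Tmat] <;> ring

lemma Tmat_one : Tmat a b c 1 0 = 1 := by
  ext i j
  fin_cases i <;> fin_cases j <;> simp [Tmat, Matrix.one_apply]

lemma Tmat_congr {x y x' y' : F} (hx : x = x') (hy : y = y') :
    Tmat a b c x y = Tmat a b c x' y' := by rw [hx, hy]

lemma Tmat_smul (k x y : F) : k • Tmat a b c x y = Tmat a b c (k * x) (k * y) := by
  ext i j
  fin_cases i <;> fin_cases j <;> simp [Tmat] <;> ring

end Blocks
section RFsec
variable [CharZero F] {a b c : F}

/-- canonical form of an element of RF -/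
lemma embT_eq (t : M2 F) (ht : t.det ≠ 0) : embT t = blk t 0 0 (t.adjugate)ᵀ := by
  unfold embT
  congr 1
  rw [Matrix.inv_def, Matrix.transpose_smul, smul_smul, Ring.inverse_eq_inv']
  rw [mul_inv_cancel₀ ht, one_smul]

lemma RF_form {r : M4 F} :
    r ∈ RF a b c ↔ ∃ x y : F, ∃ X : M2 F, (Tmat a b c x y).det ≠ 0 ∧ Xᵀ = X ∧
      r = blk (Tmat a b c x y) (Tmat a b c x y * X) 0 ((Tmat a b c x (-y))ᵀ) := by
  constructor
  · rintro ⟨t, ⟨x, y, rfl, hdet⟩, u, ⟨X, hX, rfl⟩, rfl⟩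
    refine ⟨x, y, X, hdet, hX, ?_⟩
    rw [embT_eq _ hdet, blk_mul, Tmat_adj]
    simp
  · rintro ⟨x, y, X, hdet, hX, rfl⟩
    refine ⟨Tmat a b c x y, ⟨x, y, rfl, hdet⟩, blk 1 X 0 1, ⟨X, hX, rfl⟩, ?_⟩
    rw [embT_eq _ hdet, blk_mul, Tmat_adj]
    simp

lemma RF_entry30 {r : M4 F} (hr : r ∈ RF a b c) : r 3 0 = 0 := by
  obtain ⟨x, y, X, hdet, hX, rfl⟩ := RF_form.mp hr
  rw [blk_apply_30]
  rfl

lemma RF_entry31 {r : M4 F} (hr : r ∈ RF a b c) : r 3 1 = 0 := by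
  obtain ⟨x, y, X, hdet, hX, rfl⟩ := RF_form.mp hr
  rw [blk_apply_31]
  rfl

lemma RF_mul {r1 r2 : M4 F} (h1 : r1 ∈ RF a b c) (h2 : r2 ∈ RF a b c) :
    r1 * r2 ∈ RF a b c := by
  obtain ⟨x1, y1, X1, hd1, hX1, rfl⟩ := RF_form.mp h1
  obtain ⟨x2, y2, X2, hd2, hX2, rfl⟩ := RF_form.mp h2
  set t1 := Tmat a b c x1 y1 with ht1
  set t2 := Tmat a b c x2 y2 with ht2
  set Δ2 := t2.det with hΔ2
  set X'' : M2 F := Δ2⁻¹ • (t2.adjugate * X1 * (t2.adjugate)ᵀ) + X2 with hX''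
  rw [RF_form]
  refine ⟨x1 * x2 + y1 * y2 * ((b ^ 2 - 4 * a * c) / 4), x1 * y2 + y1 * x2, X'', ?_, ?_, ?_⟩
  · rw [← Tmat_mul, Matrix.det_mul]
    exact mul_ne_zero hd1 hd2
  · rw [hX'']
    rw [Matrix.transpose_add, Matrix.transpose_smul]
    rw [Matrix.transpose_mul, Matrix.transpose_mul, Matrix.transpose_transpose, hX1, hX2]
    rw [Matrix.mul_assoc]
  · have hT : Tmat a b c (x1 * x2 + y1 * y2 * ((b ^ 2 - 4 * a * c) / 4)) (x1 * y2 + y1 * x2)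
        = t1 * t2 := (Tmat_mul x1 y1 x2 y2).symm
    have hTadj : (Tmat a b c (x1 * x2 + y1 * y2 * ((b ^ 2 - 4 * a * c) / 4))
          (-(x1 * y2 + y1 * x2)))ᵀ = (Tmat a b c x1 (-y1))ᵀ * (Tmat a b c x2 (-y2))ᵀ := by
      have hmm : Tmat a b c x2 (-y2) * Tmat a b c x1 (-y1)
          = Tmat a b c (x1 * x2 + y1 * y2 * ((b ^ 2 - 4 * a * c) / 4))
            (-(x1 * y2 + y1 * x2)) := by
        rw [Tmat_mul]
        have e1 : x2 * x1 + -y2 * -y1 * ((b ^ 2 - 4 * a * c) / 4)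
            = x1 * x2 + y1 * y2 * ((b ^ 2 - 4 * a * c) / 4) := by ring
        have e2 : x2 * -y1 + -y2 * x1 = -(x1 * y2 + y1 * x2) := by ring
        rw [e1, e2]
      rw [← Matrix.transpose_mul, hmm]
    have hB : (t1 * t2) * X'' = t1 * (t2 * X2) + t1 * X1 * (Tmat a b c x2 (-y2))ᵀ := by
      have hadj2 : t2.adjugate = Tmat a b c x2 (-y2) := by rw [ht2, Tmat_adj]
      have e1 : t1 * t2 * (Δ2⁻¹ • (t2.adjugate * X1 * (t2.adjugate)ᵀ))
          = t1 * X1 * (Tmat a b c x2 (-y2))ᵀ := by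
        rw [Matrix.mul_smul]
        have e2 : t1 * t2 * (t2.adjugate * X1 * t2.adjugateᵀ)
            = t1 * (t2 * t2.adjugate) * (X1 * t2.adjugateᵀ) := by noncomm_ring
        rw [e2, Matrix.mul_adjugate, ← hΔ2]
        rw [Matrix.mul_smul, Matrix.smul_mul, smul_smul, inv_mul_cancel₀ hd2, one_smul]
        rw [Matrix.mul_one, ← Matrix.mul_assoc, hadj2]
      rw [hX'', Matrix.mul_add, e1, add_comm, Matrix.mul_assoc]
    rw [hT, hTadj, hB, blk_mul]
    simp

lemma RF_inv {r : M4 F} (h : r ∈ RF a b c) :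
    ∃ r' ∈ RF a b c, r * r' = 1 ∧ r' * r = 1 := by
  obtain ⟨x, y, X, hd, hX, rfl⟩ := RF_form.mp h
  set t := Tmat a b c x y with hteq
  set Δ := t.det with hΔ
  set s := Tmat a b c (x / Δ) (-y / Δ) with hseq
  set Xt : M2 F := -(Δ⁻¹ • (t * X * tᵀ)) with hXt
  have hΔ0 : Δ ≠ 0 := by rw [hΔ]; exact hd
  have hδ : Δ = x ^ 2 - y ^ 2 * ((b ^ 2 - 4 * a * c) / 4) := by rw [hΔ, hteq, Tmat_det]
  have hs2 : s = Δ⁻¹ • Tmat a b c x (-y) := by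
    rw [hseq, Tmat_smul]
    exact Tmat_congr (by ring) (by ring)
  have hds : s.det = Δ⁻¹ := by
    rw [hs2, Matrix.det_smul, Tmat_det]
    have e0 : x ^ 2 - (-y) ^ 2 * ((b ^ 2 - 4 * a * c) / 4) = Δ := by rw [hδ]; ring
    rw [e0]
    simp only [Fintype.card_fin]
    rw [sq, mul_assoc, inv_mul_cancel₀ hΔ0, mul_one]
  have hsmem : blk s (s * Xt) 0 ((Tmat a b c (x / Δ) (-(-y / Δ)))ᵀ) ∈ RF a b c := by
    rw [RF_form]
    refine ⟨x / Δ, -y / Δ, Xt, by rw [← hseq, hds]; exact inv_ne_zero hd, ?_, rfl⟩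
    rw [hXt]
    rw [Matrix.transpose_neg, Matrix.transpose_smul, Matrix.transpose_mul, Matrix.transpose_mul,
      Matrix.transpose_transpose, hX, Matrix.mul_assoc]
  have hts : t * s = 1 := by
    rw [hteq, hseq, Tmat_mul]
    have e1 : x * (x / Δ) + y * (-y / Δ) * ((b ^ 2 - 4 * a * c) / 4) = 1 := by
      have e0 : x * (x / Δ) + y * (-y / Δ) * ((b ^ 2 - 4 * a * c) / 4)
          = (x ^ 2 - y ^ 2 * ((b ^ 2 - 4 * a * c) / 4)) / Δ := by ring
      rw [e0, ← hδ, div_self hΔ0]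
    rw [e1]
    have e2 : x * (-y / Δ) + y * (x / Δ) = 0 := by ring
    rw [e2, Tmat_one]
  have hadjs : Tmat a b c (x / Δ) (-(-y / Δ)) = Δ⁻¹ • t := by
    rw [hteq, Tmat_smul]
    congr 1 <;> field_simp
  have hmul : blk t (t * X) 0 ((Tmat a b c x (-y))ᵀ) *
      blk s (s * Xt) 0 ((Tmat a b c (x / Δ) (-(-y / Δ)))ᵀ) = 1 := by
    rw [blk_mul]
    have hB : t * (s * Xt) + t * X * (Tmat a b c (x / Δ) (-(-y / Δ)))ᵀ = 0 := by
      rw [hadjs, ← Matrix.mul_assoc, hts, Matrix.one_mul, hXt]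
      rw [Matrix.transpose_smul, Matrix.mul_smul]
      simp [Matrix.mul_assoc]
    have hD : (Tmat a b c x (-y))ᵀ * (Tmat a b c (x / Δ) (-(-y / Δ)))ᵀ = 1 := by
      rw [hadjs, ← Matrix.transpose_mul, Matrix.smul_mul, ← Tmat_adj, ← hteq,
        Matrix.mul_adjugate, ← hΔ, smul_smul, inv_mul_cancel₀ hd, one_smul,
        Matrix.transpose_one]
    rw [hts, hB, hD]
    simpa using blk_one
  refine ⟨_, hsmem, hmul, ?_⟩
  rw [mul_eq_one_comm] at hmul
  exact hmul

end RFsec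
section KHsec
variable {O : Subring F} {ϖ : F}

lemma det_su (hDV : IsDVSetup O ϖ) {g : M4 F} (hg : g ∈ KH O) : Su O ϖ g.det :=
  su_of_unit hDV hg.2.2 hg.1.1

lemma GSp4_mul {g h : M4 F} (hg : g ∈ GSp4 F) (hh : h ∈ GSp4 F) : g * h ∈ GSp4 F := by
  obtain ⟨hd1, μ1, hμ1, he1⟩ := hg
  obtain ⟨hd2, μ2, hμ2, he2⟩ := hh
  refine ⟨by rw [Matrix.det_mul]; exact mul_ne_zero hd1 hd2, μ1 * μ2, mul_ne_zero hμ1 hμ2, ?_⟩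
  rw [Matrix.transpose_mul]
  calc hᵀ * gᵀ * Jmat F * (g * h) = hᵀ * (gᵀ * Jmat F * g) * h := by noncomm_ring
  _ = hᵀ * (μ1 • Jmat F) * h := by rw [he1]
  _ = μ1 • (hᵀ * Jmat F * h) := by rw [Matrix.mul_smul, Matrix.smul_mul]
  _ = μ1 • (μ2 • Jmat F) := by rw [he2]
  _ = (μ1 * μ2) • Jmat F := by rw [smul_smul]

lemma GSp4_inv {g : M4 F} (hg : g ∈ GSp4 F) : g⁻¹ ∈ GSp4 F := by
  obtain ⟨hd, μ, hμ, he⟩ := hg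
  have hu : IsUnit g.det := isUnit_iff_ne_zero.mpr hd
  have hgi : g * g⁻¹ = 1 := Matrix.mul_nonsing_inv g hu
  have hig : g⁻¹ * g = 1 := Matrix.nonsing_inv_mul g hu
  refine ⟨?_, μ⁻¹, inv_ne_zero hμ, ?_⟩
  · rw [Matrix.det_nonsing_inv, Ring.inverse_eq_inv']
    exact inv_ne_zero hd
  · have key : Jmat F = μ • ((g⁻¹)ᵀ * Jmat F * g⁻¹) := by
      calc Jmat F = (g⁻¹)ᵀ * (gᵀ * Jmat F * g) * g⁻¹ := by
            rw [show (g⁻¹)ᵀ * (gᵀ * Jmat F * g) * g⁻¹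
                = ((g⁻¹)ᵀ * gᵀ) * Jmat F * (g * g⁻¹) by noncomm_ring]
            rw [← Matrix.transpose_mul, hgi, Matrix.transpose_one, Matrix.one_mul,
              Matrix.mul_one]
      _ = (g⁻¹)ᵀ * (μ • Jmat F) * g⁻¹ := by rw [he]
      _ = μ • ((g⁻¹)ᵀ * Jmat F * g⁻¹) := by rw [Matrix.mul_smul, Matrix.smul_mul]
    conv_rhs => rw [key]
    rw [smul_smul, inv_mul_cancel₀ hμ, one_smul]

lemma KH_mul (hDV : IsDVSetup O ϖ) {g h : M4 F} (hg : g ∈ KH O) (hh : h ∈ KH O) :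
    g * h ∈ KH O := by
  refine ⟨GSp4_mul hg.1 hh.1, fun i j => ?_, ?_⟩
  · rw [Matrix.mul_apply]
    exact Subring.sum_mem O (fun k _ => O.mul_mem (hg.2.1 i k) (hh.2.1 k j))
  · rw [Matrix.det_mul]
    exact su_unitSet hDV (su_mul hDV (det_su hDV hg) (det_su hDV hh))

lemma KH_inv (hDV : IsDVSetup O ϖ) {g : M4 F} (hg : g ∈ KH O) : g⁻¹ ∈ KH O := by
  have hd : g.det ≠ 0 := hg.1.1
  have hsu := det_su hDV hg
  refine ⟨GSp4_inv hg.1, fun i j => ?_, ?_⟩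
  · rw [Matrix.inv_def, Ring.inverse_eq_inv']
    simp only [Matrix.smul_apply, smul_eq_mul]
    refine O.mul_mem (su_inv_mem hDV hsu) ?_
    -- adjugate entries lie in O
    set G : Matrix (Fin 4) (Fin 4) O := fun i j => ⟨g i j, hg.2.1 i j⟩ with hG
    have hmap : g = (SubringClass.subtype O).mapMatrix G := by
      ext i j; rfl
    rw [hmap, ← RingHom.map_adjugate]
    simp only [RingHom.mapMatrix_apply, Matrix.map_apply]
    exact ((G.adjugate i j) : O).2
  · rw [Matrix.det_nonsing_inv, Ring.inverse_eq_inv']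
    exact su_unitSet hDV (su_inv hDV hsu)

end KHsec
section Klmsec
variable [CharZero F] {O : Subring F} {ϖ a b c : F} {l m : ℕ}

lemma hmat_det_ne (hϖ0 : ϖ ≠ 0) : (hmat ϖ l m).det ≠ 0 := by
  unfold hmat
  rw [Matrix.det_diagonal]
  rw [Fin.prod_univ_four]
  simp only [Matrix.cons_val_zero, Matrix.cons_val_one, Matrix.head_cons]
  refine mul_ne_zero (mul_ne_zero (mul_ne_zero (pow_ne_zero _ hϖ0) (pow_ne_zero _ hϖ0))
    one_ne_zero) ?_
  · exact pow_ne_zero _ hϖ0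

lemma hmat_mul_inv (hϖ0 : ϖ ≠ 0) : hmat ϖ l m * (hmat ϖ l m)⁻¹ = 1 :=
  Matrix.mul_nonsing_inv _ (isUnit_iff_ne_zero.mpr (hmat_det_ne hϖ0))

lemma hmat_inv_mul (hϖ0 : ϖ ≠ 0) : (hmat ϖ l m)⁻¹ * hmat ϖ l m = 1 :=
  Matrix.nonsing_inv_mul _ (isUnit_iff_ne_zero.mpr (hmat_det_ne hϖ0))

lemma hmat_inv_eq (hϖ0 : ϖ ≠ 0) :
    (hmat ϖ l m)⁻¹ = Matrix.diagonal ![(ϖ ^ (2*m+l))⁻¹, (ϖ ^ (m+l))⁻¹, 1, (ϖ ^ m)⁻¹] := by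
  refine Matrix.inv_eq_right_inv ?_
  unfold hmat
  rw [Matrix.diagonal_mul_diagonal]
  have hv : (fun i => ![ϖ ^ (2*m+l), ϖ ^ (m+l), 1, ϖ ^ m] i *
      ![(ϖ ^ (2*m+l))⁻¹, (ϖ ^ (m+l))⁻¹, 1, (ϖ ^ m)⁻¹] i) = (1 : Fin 4 → F) := by
    funext i
    fin_cases i <;>
    simp [mul_inv_cancel₀ (pow_ne_zero _ hϖ0 : ϖ ^ (2*m+l) ≠ 0),
      mul_inv_cancel₀ (pow_ne_zero _ hϖ0 : ϖ ^ (m+l) ≠ 0),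
      mul_inv_cancel₀ (pow_ne_zero _ hϖ0 : ϖ ^ m ≠ 0)]
  rw [hv]
  exact Matrix.diagonal_one

lemma diag_conj_apply (d1 d2 : Fin 4 → F) (r : M4 F) (i j : Fin 4) :
    (Matrix.diagonal d1 * r * Matrix.diagonal d2) i j = d1 i * r i j * d2 j := by
  rw [Matrix.mul_diagonal, Matrix.diagonal_mul]

lemma Klm_entry30 (hϖ0 : ϖ ≠ 0) {g : M4 F} (hg : g ∈ Klm O ϖ a b c l m) : g 3 0 = 0 := by
  obtain ⟨-, r, hr, rfl⟩ := hg
  rw [hmat_inv_eq hϖ0]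
  unfold hmat
  rw [diag_conj_apply, RF_entry30 hr]
  ring

lemma Klm_entry31 (hϖ0 : ϖ ≠ 0) {g : M4 F} (hg : g ∈ Klm O ϖ a b c l m) : g 3 1 = 0 := by
  obtain ⟨-, r, hr, rfl⟩ := hg
  rw [hmat_inv_eq hϖ0]
  unfold hmat
  rw [diag_conj_apply, RF_entry31 hr]
  ring

lemma Klm_mul (hDV : IsDVSetup O ϖ) {g1 g2 : M4 F} (h1 : g1 ∈ Klm O ϖ a b c l m)
    (h2 : g2 ∈ Klm O ϖ a b c l m) : g1 * g2 ∈ Klm O ϖ a b c l m := by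
  obtain ⟨hK1, r1, hr1, rfl⟩ := h1
  obtain ⟨hK2, r2, hr2, rfl⟩ := h2
  have hϖ0 := hDV.2.2.1
  refine ⟨KH_mul hDV hK1 hK2, r1 * r2, RF_mul hr1 hr2, ?_⟩
  calc (hmat ϖ l m)⁻¹ * r1 * hmat ϖ l m * ((hmat ϖ l m)⁻¹ * r2 * hmat ϖ l m)
      = (hmat ϖ l m)⁻¹ * r1 * (hmat ϖ l m * (hmat ϖ l m)⁻¹) * r2 * hmat ϖ l m := by
        noncomm_ring
  _ = (hmat ϖ l m)⁻¹ * (r1 * r2) * hmat ϖ l m := by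
        rw [hmat_mul_inv hϖ0, Matrix.mul_one, Matrix.mul_assoc ((hmat ϖ l m)⁻¹ * r1)]
        noncomm_ring

lemma Klm_inv (hDV : IsDVSetup O ϖ) {g : M4 F} (hg : g ∈ Klm O ϖ a b c l m) :
    g⁻¹ ∈ Klm O ϖ a b c l m := by
  obtain ⟨hK, r, hr, rfl⟩ := hg
  have hϖ0 := hDV.2.2.1
  obtain ⟨r', hr', hrr', hr'r⟩ := RF_inv hr
  have hinv : ((hmat ϖ l m)⁻¹ * r * hmat ϖ l m)⁻¹ = (hmat ϖ l m)⁻¹ * r' * hmat ϖ l m := by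
    refine Matrix.inv_eq_right_inv ?_
    calc (hmat ϖ l m)⁻¹ * r * hmat ϖ l m * ((hmat ϖ l m)⁻¹ * r' * hmat ϖ l m)
        = (hmat ϖ l m)⁻¹ * r * (hmat ϖ l m * (hmat ϖ l m)⁻¹) * r' * hmat ϖ l m := by
          noncomm_ring
    _ = (hmat ϖ l m)⁻¹ * (r * r') * hmat ϖ l m := by
          rw [hmat_mul_inv hϖ0, Matrix.mul_one, Matrix.mul_assoc ((hmat ϖ l m)⁻¹ * r)]
          noncomm_ring
    _ = 1 := by rw [hrr', Matrix.mul_one, hmat_inv_mul hϖ0]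
  have hKH := KH_inv hDV hK
  rw [hinv] at hKH
  rw [hinv]
  exact ⟨hKH, r', hr', rfl⟩

end Klmsec
section Ksharpsec

lemma det_four_expand (g : M4 F) : g.det =
      g 0 0*g 1 1*g 2 2*g 3 3
      - g 0 0*g 1 1*g 2 3*g 3 2
      - g 0 0*g 1 2*g 2 1*g 3 3
      + g 0 0*g 1 2*g 2 3*g 3 1
      + g 0 0*g 1 3*g 2 1*g 3 2
      - g 0 0*g 1 3*g 2 2*g 3 1
      - g 0 1*g 1 0*g 2 2*g 3 3
      + g 0 1*g 1 0*g 2 3*g 3 2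
      + g 0 1*g 1 2*g 2 0*g 3 3
      - g 0 1*g 1 2*g 2 3*g 3 0
      - g 0 1*g 1 3*g 2 0*g 3 2
      + g 0 1*g 1 3*g 2 2*g 3 0
      + g 0 2*g 1 0*g 2 1*g 3 3
      - g 0 2*g 1 0*g 2 3*g 3 1
      - g 0 2*g 1 1*g 2 0*g 3 3
      + g 0 2*g 1 1*g 2 3*g 3 0
      + g 0 2*g 1 3*g 2 0*g 3 1
      - g 0 2*g 1 3*g 2 1*g 3 0
      - g 0 3*g 1 0*g 2 1*g 3 2
      + g 0 3*g 1 0*g 2 2*g 3 1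
      + g 0 3*g 1 1*g 2 0*g 3 2
      - g 0 3*g 1 1*g 2 2*g 3 0
      - g 0 3*g 1 2*g 2 0*g 3 1
      + g 0 3*g 1 2*g 2 1*g 3 0 := by
  rw [Matrix.det_succ_row_zero]
  simp [Fin.sum_univ_succ, Matrix.det_fin_three, Matrix.submatrix_apply,
    show (((0:Fin 4)).succAbove 0) = 1 from by decide,
    show (((0:Fin 4)).succAbove 1) = 2 from by decide,
    show (((0:Fin 4)).succAbove 2) = 3 from by decide,
    show (((1:Fin 4)).succAbove 0) = 0 from by decide,
    show (((1:Fin 4)).succAbove 1) = 2 from by decide,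
    show (((1:Fin 4)).succAbove 2) = 3 from by decide,
    show (((2:Fin 4)).succAbove 0) = 0 from by decide,
    show (((2:Fin 4)).succAbove 1) = 1 from by decide,
    show (((2:Fin 4)).succAbove 2) = 3 from by decide,
    show (((3:Fin 4)).succAbove 0) = 0 from by decide,
    show (((3:Fin 4)).succAbove 1) = 1 from by decide,
    show (((3:Fin 4)).succAbove 2) = 2 from by decide,
    show (Fin.succ 2 : Fin 4) = 3 from by decide]
  ring

variable {O : Subring F} {ϖ : F}

lemma det_offdiag (O : Subring F) (ϖ : F) {n : ℕ} (hn : 1 ≤ n) (hϖ : ϖ ∈ O) {g : M4 F}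
    (hO : ∀ i j, g i j ∈ O)
    (h01 : g 0 1 ∈ ppow O ϖ n) (h21 : g 2 1 ∈ ppow O ϖ n) (h30 : g 3 0 ∈ ppow O ϖ n)
    (h31 : g 3 1 ∈ ppow O ϖ n) (h32 : g 3 2 ∈ ppow O ϖ n) (h20 : g 2 0 ∈ ppow O ϖ 1) :
    g.det - g 0 0 * g 1 1 * g 2 2 * g 3 3 ∈ ppow O ϖ 1 := by
  have hp01 := ppow_mono O ϖ hϖ hn h01
  have hp21 := ppow_mono O ϖ hϖ hn h21
  have hp30 := ppow_mono O ϖ hϖ hn h30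
  have hp31 := ppow_mono O ϖ hϖ hn h31
  have hp32 := ppow_mono O ϖ hϖ hn h32
  have hp20 := h20
  have heq : g.det - g 0 0 * g 1 1 * g 2 2 * g 3 3 =
      (-(g 3 2 * (g 0 0 * (g 1 1 * g 2 3)))) +
      (-(g 2 1 * (g 0 0 * (g 1 2 * g 3 3)))) +
      (g 3 1 * (g 0 0 * (g 1 2 * g 2 3))) +
      (g 2 1 * (g 0 0 * (g 1 3 * g 3 2))) +
      (-(g 3 1 * (g 0 0 * (g 1 3 * g 2 2)))) +
      (-(g 0 1 * (g 1 0 * (g 2 2 * g 3 3)))) +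
      (g 0 1 * (g 1 0 * (g 2 3 * g 3 2))) +
      (g 0 1 * (g 1 2 * (g 2 0 * g 3 3))) +
      (-(g 0 1 * (g 1 2 * (g 2 3 * g 3 0)))) +
      (-(g 0 1 * (g 1 3 * (g 2 0 * g 3 2)))) +
      (g 0 1 * (g 1 3 * (g 2 2 * g 3 0))) +
      (g 2 1 * (g 0 2 * (g 1 0 * g 3 3))) +
      (-(g 3 1 * (g 0 2 * (g 1 0 * g 2 3)))) +
      (-(g 2 0 * (g 0 2 * (g 1 1 * g 3 3)))) +
      (g 3 0 * (g 0 2 * (g 1 1 * g 2 3))) +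
      (g 3 1 * (g 0 2 * (g 1 3 * g 2 0))) +
      (-(g 2 1 * (g 0 2 * (g 1 3 * g 3 0)))) +
      (-(g 2 1 * (g 0 3 * (g 1 0 * g 3 2)))) +
      (g 3 1 * (g 0 3 * (g 1 0 * g 2 2))) +
      (g 3 2 * (g 0 3 * (g 1 1 * g 2 0))) +
      (-(g 3 0 * (g 0 3 * (g 1 1 * g 2 2)))) +
      (-(g 3 1 * (g 0 3 * (g 1 2 * g 2 0)))) +
      (g 2 1 * (g 0 3 * (g 1 2 * g 3 0))) := by
    rw [det_four_expand]
    ring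
  rw [heq]
  repeat' apply p_add
  · exact p_neg O ϖ (p_mul_O O ϖ hp32 (O.mul_mem (hO 0 0) (O.mul_mem (hO 1 1) (hO 2 3))))
  · exact p_neg O ϖ (p_mul_O O ϖ hp21 (O.mul_mem (hO 0 0) (O.mul_mem (hO 1 2) (hO 3 3))))
  · exact p_mul_O O ϖ hp31 (O.mul_mem (hO 0 0) (O.mul_mem (hO 1 2) (hO 2 3)))
  · exact p_mul_O O ϖ hp21 (O.mul_mem (hO 0 0) (O.mul_mem (hO 1 3) (hO 3 2)))
  · exact p_neg O ϖ (p_mul_O O ϖ hp31 (O.mul_mem (hO 0 0) (O.mul_mem (hO 1 3) (hO 2 2))))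
  · exact p_neg O ϖ (p_mul_O O ϖ hp01 (O.mul_mem (hO 1 0) (O.mul_mem (hO 2 2) (hO 3 3))))
  · exact p_mul_O O ϖ hp01 (O.mul_mem (hO 1 0) (O.mul_mem (hO 2 3) (hO 3 2)))
  · exact p_mul_O O ϖ hp01 (O.mul_mem (hO 1 2) (O.mul_mem (hO 2 0) (hO 3 3)))
  · exact p_neg O ϖ (p_mul_O O ϖ hp01 (O.mul_mem (hO 1 2) (O.mul_mem (hO 2 3) (hO 3 0))))
  · exact p_neg O ϖ (p_mul_O O ϖ hp01 (O.mul_mem (hO 1 3) (O.mul_mem (hO 2 0) (hO 3 2))))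
  · exact p_mul_O O ϖ hp01 (O.mul_mem (hO 1 3) (O.mul_mem (hO 2 2) (hO 3 0)))
  · exact p_mul_O O ϖ hp21 (O.mul_mem (hO 0 2) (O.mul_mem (hO 1 0) (hO 3 3)))
  · exact p_neg O ϖ (p_mul_O O ϖ hp31 (O.mul_mem (hO 0 2) (O.mul_mem (hO 1 0) (hO 2 3))))
  · exact p_neg O ϖ (p_mul_O O ϖ hp20 (O.mul_mem (hO 0 2) (O.mul_mem (hO 1 1) (hO 3 3))))
  · exact p_mul_O O ϖ hp30 (O.mul_mem (hO 0 2) (O.mul_mem (hO 1 1) (hO 2 3)))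
  · exact p_mul_O O ϖ hp31 (O.mul_mem (hO 0 2) (O.mul_mem (hO 1 3) (hO 2 0)))
  · exact p_neg O ϖ (p_mul_O O ϖ hp21 (O.mul_mem (hO 0 2) (O.mul_mem (hO 1 3) (hO 3 0))))
  · exact p_neg O ϖ (p_mul_O O ϖ hp21 (O.mul_mem (hO 0 3) (O.mul_mem (hO 1 0) (hO 3 2))))
  · exact p_mul_O O ϖ hp31 (O.mul_mem (hO 0 3) (O.mul_mem (hO 1 0) (hO 2 2)))
  · exact p_mul_O O ϖ hp32 (O.mul_mem (hO 0 3) (O.mul_mem (hO 1 1) (hO 2 0)))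
  · exact p_neg O ϖ (p_mul_O O ϖ hp30 (O.mul_mem (hO 0 3) (O.mul_mem (hO 1 1) (hO 2 2))))
  · exact p_neg O ϖ (p_mul_O O ϖ hp31 (O.mul_mem (hO 0 3) (O.mul_mem (hO 1 2) (hO 2 0))))
  · exact p_mul_O O ϖ hp21 (O.mul_mem (hO 0 3) (O.mul_mem (hO 1 2) (hO 3 0)))

end Ksharpsec
section Final
variable {O : Subring F} {ϖ a b c : F} {n l m : ℕ}

lemma Ksharp_11_not_p (hDV : IsDVSetup O ϖ) (hn : 1 ≤ n) {g : M4 F}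
    (hg : g ∈ Ksharp O ϖ n) : g 1 1 ∉ ppow O ϖ 1 := by
  intro hp
  obtain ⟨hKH, hu0, hu1, hu2, hu3, hq01, hq21, hq30, hq31, hq32, hq20⟩ := hg
  have hO := hKH.2.1
  have hdet := det_su hDV hKH
  apply hdet.2
  have hE := det_offdiag O ϖ hn hDV.2.1 hO hq01 hq21 hq30 hq31 hq32 hq20
  have hprod : g 0 0 * g 1 1 * g 2 2 * g 3 3 ∈ ppow O ϖ 1 :=
    p_mul_O O ϖ (p_mul_O O ϖ (O_mul_p O ϖ (hO 0 0) hp) (hO 2 2)) (hO 3 3)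
  have : g.det = (g.det - g 0 0 * g 1 1 * g 2 2 * g 3 3) + g 0 0 * g 1 1 * g 2 2 * g 3 3 := by
    ring
  rw [this]
  exact p_add O ϖ hE hprod

/-- explicit inverse of s1*s2*s1 -/
def N4 (F : Type*) [Field F] : M4 F := !![1,0,0,0; 0,0,0,-1; 0,0,1,0; 0,1,0,0]

lemma N4_mul_sss : N4 F * (s1 F * s2 F * s1 F) = 1 := by
  ext i j
  fin_cases i <;> fin_cases j <;>
    simp [N4, s1, s2, Matrix.mul_apply, Fin.sum_univ_four, Matrix.one_apply,
      Matrix.vecHead, Matrix.vecTail]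

lemma sss_inv : (s1 F * s2 F * s1 F)⁻¹ = N4 F := by
  refine Matrix.inv_eq_left_inv N4_mul_sss

lemma N4_row1 (g h₁ : M4 F) (j : Fin 4) :
    (N4 F * g * h₁) 1 j
      = -(g 3 0 * h₁ 0 j + g 3 1 * h₁ 1 j + g 3 2 * h₁ 2 j + g 3 3 * h₁ 3 j) := by
  have e : ∀ k, (N4 F * g) 1 k = -(g 3 k) := by
    intro k
    simp [N4, Matrix.mul_apply, Fin.sum_univ_four]
  rw [Matrix.mul_apply, Fin.sum_univ_four, e 0, e 1, e 2, e 3]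
  ring

variable [CharZero F]

lemma key_entry (hDV : IsDVSetup O ϖ) {g : M4 F} (hg : g ∈ Klm O ϖ a b c l m)
    (h₁ : M4 F) (hO1 : ∀ i j, h₁ i j ∈ O) (h21 : h₁ 2 1 = 0) (h31 : h₁ 3 1 ∈ ppow O ϖ 1) :
    ((s1 F * s2 F * s1 F)⁻¹ * g * h₁) 1 1 ∈ ppow O ϖ 1 ∧
      ∀ j, ((s1 F * s2 F * s1 F)⁻¹ * g * h₁) 1 j ∈ O := by
  have hϖ0 := hDV.2.2.1
  have hO := hg.1.2.1
  have h30 := Klm_entry30 hϖ0 hg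
  have h31' := Klm_entry31 hϖ0 hg
  rw [sss_inv]
  constructor
  · rw [N4_row1, h30, h31', h21]
    have : (0 : F) * h₁ 0 1 + 0 * h₁ 1 1 + g 3 2 * 0 + g 3 3 * h₁ 3 1 = g 3 3 * h₁ 3 1 := by ring
    rw [this]
    exact p_neg O ϖ (O_mul_p O ϖ (hO 3 3) h31)
  · intro j
    rw [N4_row1]
    refine O.neg_mem (O.add_mem (O.add_mem (O.add_mem ?_ ?_) ?_) ?_) <;>
      exact O.mul_mem (hO 3 _) (hO1 _ _)

lemma key_disj (hDV : IsDVSetup O ϖ) (hn : 1 ≤ n) (h₁ : M4 F)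
    (hO1 : ∀ i j, h₁ i j ∈ O) (h21 : h₁ 2 1 = 0) (h31 : h₁ 3 1 ∈ ppow O ϖ 1) :
    Disjoint (DC (Klm O ϖ a b c l m) (s1 F * s2 F * s1 F) (Ksharp O ϖ n))
      (DC (Klm O ϖ a b c l m) h₁ (Ksharp O ϖ n)) := by
  have hϖ0 := hDV.2.2.1
  have hϖO := hDV.2.1
  rw [Set.disjoint_left]
  rintro x ⟨k1, hk1, k2, hk2, rfl⟩ ⟨k1', hk1', k2', hk2', heq⟩
  have hgK : k1⁻¹ * k1' ∈ Klm O ϖ a b c l m := Klm_mul hDV (Klm_inv hDV hk1) hk1'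
  set g := k1⁻¹ * k1' with hgdef
  have hk1inv : k1⁻¹ * k1 = 1 :=
    Matrix.nonsing_inv_mul k1 (isUnit_iff_ne_zero.mpr hk1.1.1.1)
  -- derive k2 = X * k2'
  have heq' : k1 * (s1 F * (s2 F * (s1 F * k2))) = k1' * (h₁ * k2') := by
    simp only [← Matrix.mul_assoc]
    simp only [Matrix.mul_assoc] at heq ⊢
    exact heq
  have h1 : s1 F * (s2 F * (s1 F * k2)) = k1⁻¹ * (k1' * (h₁ * k2')) := by
    calc s1 F * (s2 F * (s1 F * k2))
        = (k1⁻¹ * k1) * (s1 F * (s2 F * (s1 F * k2))) := by rw [hk1inv, Matrix.one_mul]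
    _ = k1⁻¹ * (k1 * (s1 F * (s2 F * (s1 F * k2)))) := by rw [Matrix.mul_assoc]
    _ = k1⁻¹ * (k1' * (h₁ * k2')) := by rw [heq']
  have h3 : k2 = ((s1 F * s2 F * s1 F)⁻¹ * g * h₁) * k2' := by
    rw [sss_inv, hgdef]
    have e0 : k2 = N4 F * (s1 F * (s2 F * (s1 F * k2))) := by
      rw [show s1 F * (s2 F * (s1 F * k2)) = (s1 F * s2 F * s1 F) * k2 by
        simp only [Matrix.mul_assoc]]
      rw [← Matrix.mul_assoc, N4_mul_sss, Matrix.one_mul]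
    rw [e0, h1]
    simp only [Matrix.mul_assoc]
  have hkey := key_entry hDV hgK h₁ hO1 h21 h31
  set X := (s1 F * s2 F * s1 F)⁻¹ * g * h₁ with hXdef
  obtain ⟨hKH', hu0, hu1, hu2, hu3, hq01, hq21, hq30, hq31, hq32, hq20⟩ := hk2'
  have hp11 : k2 1 1 ∈ ppow O ϖ 1 := by
    rw [h3, Matrix.mul_apply, Fin.sum_univ_four]
    refine p_add O ϖ (p_add O ϖ (p_add O ϖ ?_ ?_) ?_) ?_
    · exact O_mul_p O ϖ (hkey.2 0) (ppow_mono O ϖ hϖO hn hq01)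
    · exact p_mul_O O ϖ hkey.1 (hKH'.2.1 1 1)
    · exact O_mul_p O ϖ (hkey.2 2) (ppow_mono O ϖ hϖO hn hq21)
    · exact O_mul_p O ϖ (hkey.2 3) (ppow_mono O ϖ hϖO hn hq31)
  exact Ksharp_11_not_p hDV hn hk2 hp11

lemma Amat_eq (z : F) : Amat ϖ z = !![1,0,0,0; 0,1,0,0; 0,0,1,0; 0,z*ϖ,0,1] := by
  unfold Amat E4
  ext i j
  fin_cases i <;> fin_cases j <;>
    simp [Matrix.single, Matrix.one_apply, Matrix.vecHead, Matrix.vecTail]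

lemma DEs_eq (w y : F) :
    Dmat w * Emat ϖ y w * s1 F = !![0,1,0,0; 1,w,0,0; y*ϖ,0,-w,1; 0,y*ϖ,1,0] := by
  unfold Dmat Emat E4
  ext i j
  fin_cases i <;> fin_cases j <;>
    simp [Matrix.single, Matrix.one_apply, s1, Matrix.mul_apply,
      Fin.sum_univ_four, Matrix.vecHead, Matrix.vecTail] <;> ring

end Final
section Props
variable [CharZero F] {O : Subring F} {ϖ : F} {n m : ℕ}

lemma Amat_props (hDV : IsDVSetup O ϖ) {z : F} (hz : z ∈ ppow O ϖ (n - m - 1)) :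
    (∀ i j, Amat ϖ z i j ∈ O) ∧ Amat ϖ z 2 1 = 0 ∧ Amat ϖ z 3 1 ∈ ppow O ϖ 1 := by
  have hϖO := hDV.2.1
  have hzO : z ∈ O := ppow_subset_O O ϖ hϖO hz
  refine ⟨?_, ?_, ?_⟩
  · intro i j
    rw [Amat_eq]
    fin_cases i <;> fin_cases j <;>
      simp [Matrix.vecHead, Matrix.vecTail] <;>
      first
        | exact O.zero_mem
        | exact O.one_mem
        | exact O.mul_mem hzO hϖO
  · rw [Amat_eq]
    rfl
  · rw [Amat_eq]
    have e : (!![1,0,0,0; 0,1,0,0; 0,0,1,0; 0,z*ϖ,0,1] : M4 F) 3 1 = z * ϖ := by rfl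
    rw [e]
    exact ⟨z, hzO, by ring⟩

lemma DEs_props (hDV : IsDVSetup O ϖ) {w y : F} (hw : w ∈ unitSet O)
    (hy : y ∈ ppow O ϖ (n - m - 1)) :
    (∀ i j, (Dmat w * Emat ϖ y w * s1 F) i j ∈ O) ∧ (Dmat w * Emat ϖ y w * s1 F) 2 1 = 0 ∧
      (Dmat w * Emat ϖ y w * s1 F) 3 1 ∈ ppow O ϖ 1 := by
  have hϖO := hDV.2.1
  have hyO : y ∈ O := ppow_subset_O O ϖ hϖO hy
  have hwO : w ∈ O := hw.1
  refine ⟨?_, ?_, ?_⟩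
  · intro i j
    rw [DEs_eq]
    fin_cases i <;> fin_cases j <;>
      simp [Matrix.vecHead, Matrix.vecTail] <;>
      first
        | exact O.zero_mem
        | exact O.one_mem
        | exact hwO
        | exact O.neg_mem hwO
        | exact O.mul_mem hyO hϖO
  · rw [DEs_eq]
    rfl
  · rw [DEs_eq]
    have e : (!![0,1,0,0; 1,w,0,0; y*ϖ,0,-w,1; 0,y*ϖ,1,0] : M4 F) 3 1 = y * ϖ := by rfl
    rw [e]
    exact ⟨y, hyO, by ring⟩

end Props
/-- the double coset `K_{l,m} s₁s₂s₁ K^#(pⁿ)` is disjoint from the double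
cosets `K_{l,m} A(z) K^#(pⁿ)` and `K_{l,m} D(w)E(y,w)s₁ K^#(pⁿ)`; indeed, for every
element `h(l,m)⁻¹ r h(l,m)` of `K_{l,m}` (with `r ∈ R(F)`) the matrix
`(s₁s₂s₁)⁻¹ h(l,m)⁻¹ r h(l,m) h₁` has its (2,2) entry in `p` and hence does not lie in
`K^#(pⁿ)`. -/
theorem statement8 [CharZero F] (O : Subring F) (ϖ : F) (hDV : IsDVSetup O ϖ)
    (hres : 0 < resCard O ϖ)
    (a b c : F) (ha : a ∈ O) (hb : b ∈ O) (hc : c ∈ unitSet O)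
    (hd0 : b ^ 2 - 4 * a * c ≠ 0)
    (n l m : ℕ) (hn : 1 ≤ n) (hm : 1 ≤ m) :
    (∀ z ∈ ppow O ϖ (n - m - 1),
      Disjoint (DC (Klm O ϖ a b c l m) (s1 F * s2 F * s1 F) (Ksharp O ϖ n))
        (DC (Klm O ϖ a b c l m) (Amat ϖ z) (Ksharp O ϖ n))) ∧
    (∀ w ∈ unitSet O, ∀ y ∈ ppow O ϖ (n - m - 1),
      Disjoint (DC (Klm O ϖ a b c l m) (s1 F * s2 F * s1 F) (Ksharp O ϖ n))
        (DC (Klm O ϖ a b c l m) (Dmat w * Emat ϖ y w * s1 F) (Ksharp O ϖ n))) ∧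
    (∀ g ∈ Klm O ϖ a b c l m, ∀ h₁ : M4 F,
      ((∃ z ∈ ppow O ϖ (n - m - 1), h₁ = Amat ϖ z) ∨
        (∃ w ∈ unitSet O, ∃ y ∈ ppow O ϖ (n - m - 1),
          h₁ = Dmat w * Emat ϖ y w * s1 F)) →
      ((s1 F * s2 F * s1 F)⁻¹ * g * h₁) 1 1 ∈ ppow O ϖ 1 ∧
        (s1 F * s2 F * s1 F)⁻¹ * g * h₁ ∉ Ksharp O ϖ n) := by
  refine ⟨?_, ?_, ?_⟩
  · intro z hz
    obtain ⟨h1, h2, h3⟩ := Amat_props hDV hz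
    exact key_disj hDV hn _ h1 h2 h3
  · intro w hw y hy
    obtain ⟨h1, h2, h3⟩ := DEs_props hDV hw hy
    exact key_disj hDV hn _ h1 h2 h3
  · intro g hg h₁ hcase
    rcases hcase with ⟨z, hz, rfl⟩ | ⟨w, hw, y, hy, rfl⟩
    · obtain ⟨h1, h2, h3⟩ := Amat_props hDV hz
      have hk := key_entry hDV hg _ h1 h2 h3
      exact ⟨hk.1, fun hKs => Ksharp_11_not_p hDV hn hKs hk.1⟩
    · obtain ⟨h1, h2, h3⟩ := DEs_props hDV hw hy
      have hk := key_entry hDV hg _ h1 h2 h3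
      exact ⟨hk.1, fun hKs => Ksharp_11_not_p hDV hn hKs hk.1⟩

end GSpPaper
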